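/- arXiv:1407.7400 — 3 statements merged into one kernel-verified Lean document; each statement's English description precedes it below -/
import Mathlib

section
/- Let f : H → (-∞,∞] and g : G → (-∞,∞] be proper closed convex functions and A : H → G a continuous linear map. If x* is a minimizer of x ↦ f(x) + g(A x) and there exists q with −q ∈ ∂g(A x*) and A* q ∈ ∂f(x*), then y* := A x* is a minimizer of y ↦ (f* ∘ A*)*(y) + g(y). -/
/-!
Write `F := (f* ∘ A*)*`. Fenchel–Young gives `F (A x) ≤ f x` for every `x`, and its equality
case at `x*` (where `A* q ∈ ∂f(x*)`) gives `F y ≥ f x* + ⟨q, y - A x*⟩`; hence `q ∈ ∂F(A x*)`.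
Adding this subgradient inequality to the one for `-q ∈ ∂g(A x*)` makes the inner-product terms
cancel, so `A x*` minimizes `F + g`.
-/

noncomputable def econj {E : Type*} [NormedAddCommGroup E] [InnerProductSpace ℝ E]
    (f : E → EReal) (v : E) : EReal :=
  ⨆ x : E, ((inner ℝ v x : ℝ) : EReal) - f x

def EConvex {E : Type*} [NormedAddCommGroup E] [InnerProductSpace ℝ E] (f : E → EReal) : Prop :=
  ∀ x y : E, ∀ a b : ℝ, 0 ≤ a → 0 ≤ b → a + b = 1 →
    f (a • x + b • y) ≤ (a : EReal) * f x + (b : EReal) * f y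

def Proper {E : Type*} (f : E → EReal) : Prop :=
  (∃ x, f x ≠ ⊤) ∧ ∀ x, f x ≠ ⊥

/-- `v ∈ ∂f(x)`: the convex subdifferential. -/
def SubdiffAt {E : Type*} [NormedAddCommGroup E] [InnerProductSpace ℝ E]
    (f : E → EReal) (x v : E) : Prop :=
  ∀ y : E, f x + ((inner ℝ v (y - x) : ℝ) : EReal) ≤ f y

namespace EReal

lemma coe_sub_le_comm {a : ℝ} {c e : EReal} (h : (a : EReal) - e ≤ c) :
    (a : EReal) - c ≤ e := by
  induction e using EReal.rec with
  | bot => simp_all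
  | coe t =>
    induction c using EReal.rec with
    | bot => exact absurd (le_bot_iff.mp h) (coe_ne_bot (a - t))
    | coe s => norm_cast at h ⊢; linarith
    | top => simp
  | top => simp

lemma coe_sub_le_coe_sub_of_add_le {a b : ℝ} {d e : EReal}
    (h : e + ((a - b : ℝ) : EReal) ≤ d) : (a : EReal) - d ≤ b - e := by
  induction e using EReal.rec with
  | bot => simp
  | coe t =>
    induction d using EReal.rec with
    | bot => exact absurd (le_bot_iff.mp h) (coe_ne_bot (t + (a - b)))
    | coe s => norm_cast at h ⊢; linarith
    | top => simp
  | top =>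
    rw [top_add_coe, top_le_iff] at h
    rw [h, sub_top]
    exact bot_le

lemma coe_sub_coe_sub (a b : ℝ) (e : EReal) :
    (a : EReal) - (b - e) = e + ((a - b : ℝ) : EReal) := by
  induction e using EReal.rec with
  | bot => rw [coe_sub_bot, sub_top, bot_add]
  | coe t => norm_cast; ring
  | top => rw [sub_top, coe_sub_bot, top_add_coe]

end EReal

section Conjugate

variable {E : Type*} [NormedAddCommGroup E] [InnerProductSpace ℝ E]

lemma inner_sub_le_econj (f : E → EReal) (v x : E) :
    ((inner ℝ v x : ℝ) : EReal) - f x ≤ econj f v :=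
  le_iSup (fun x => ((inner ℝ v x : ℝ) : EReal) - f x) x

lemma SubdiffAt.econj_le {f : E → EReal} {x v : E} (h : SubdiffAt f x v) :
    econj f v ≤ ((inner ℝ v x : ℝ) : EReal) - f x :=
  iSup_le fun y => EReal.coe_sub_le_coe_sub_of_add_le (by simpa [inner_sub_right] using h y)

lemma SubdiffAt.add_le_add_of_neg {φ ψ : E → EReal} {y v : E} (hφ : SubdiffAt φ y v)
    (hψ : SubdiffAt ψ y (-v)) (z : E) : φ y + ψ y ≤ φ z + ψ z :=
  calc φ y + ψ y
      = (φ y + ((inner ℝ v (z - y) : ℝ) : EReal))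
          + (ψ y + ((inner ℝ (-v) (z - y) : ℝ) : EReal)) := by
        rw [add_add_add_comm, ← EReal.coe_add, inner_neg_left, add_neg_cancel, EReal.coe_zero,
          add_zero]
    _ ≤ φ z + ψ z := add_le_add (hφ z) (hψ z)

end Conjugate

section Adjoint

open ContinuousLinearMap

variable {H G : Type*} [NormedAddCommGroup H] [InnerProductSpace ℝ H] [CompleteSpace H]
  [NormedAddCommGroup G] [InnerProductSpace ℝ G] [CompleteSpace G]

lemma econj_econj_comp_adjoint_apply_le (f : H → EReal) (A : H →L[ℝ] G) (x : H) :
    econj (fun v => econj f (adjoint A v)) (A x) ≤ f x :=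
  iSup_le fun v => EReal.coe_sub_le_comm <| by
    simpa [adjoint_inner_left, real_inner_comm] using inner_sub_le_econj f (adjoint A v) x

lemma SubdiffAt.econj_econj_comp_adjoint {f : H → EReal} {A : H →L[ℝ] G} {x : H} {q : G}
    (h : SubdiffAt f x (adjoint A q)) :
    SubdiffAt (econj fun v => econj f (adjoint A v)) (A x) q := fun y =>
  calc _ ≤ f x + ((inner ℝ q (y - A x) : ℝ) : EReal) :=
        add_le_add_left (econj_econj_comp_adjoint_apply_le f A x) _
    _ = ((inner ℝ y q : ℝ) : EReal) - (((inner ℝ (adjoint A q) x : ℝ) : EReal) - f x) := by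
        rw [EReal.coe_sub_coe_sub, adjoint_inner_left, inner_sub_right, real_inner_comm y q]
    _ ≤ ((inner ℝ y q : ℝ) : EReal) - econj f (adjoint A q) :=
        EReal.sub_le_sub le_rfl h.econj_le
    _ ≤ econj (fun v => econj f (adjoint A v)) y :=
        inner_sub_le_econj (fun v => econj f (adjoint A v)) y q

end Adjoint

theorem stmt11_general {H G : Type*} [NormedAddCommGroup H] [InnerProductSpace ℝ H] [CompleteSpace H]
    [NormedAddCommGroup G] [InnerProductSpace ℝ G] [CompleteSpace G]
    (f : H → EReal)
    (g : G → EReal)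
    (A : H →L[ℝ] G) (xs : H)
    (q : G) (hq1 : SubdiffAt g (A xs) (-q))
    (hq2 : SubdiffAt f xs (ContinuousLinearMap.adjoint A q)) :
    ∀ y : G,
      econj (fun v : G => econj f (ContinuousLinearMap.adjoint A v)) (A xs) + g (A xs)
        ≤ econj (fun v : G => econj f (ContinuousLinearMap.adjoint A v)) y + g y := fun y =>
  hq2.econj_econj_comp_adjoint.add_le_add_of_neg hq1 y

/-- if `x*` minimizes `f + g∘A` and `−q ∈ ∂g(Ax*)`, `A*q ∈ ∂f(x*)`, then
`y* = A x*` minimizes `(f*∘A*)* + g`. -/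
theorem stmt11 {H G : Type*} [NormedAddCommGroup H] [InnerProductSpace ℝ H] [CompleteSpace H]
    [NormedAddCommGroup G] [InnerProductSpace ℝ G] [CompleteSpace G]
    (f : H → EReal) (hf : Proper f) (hfc : LowerSemicontinuous f) (hfconv : EConvex f)
    (g : G → EReal) (hg : Proper g) (hgc : LowerSemicontinuous g) (hgconv : EConvex g)
    (A : H →L[ℝ] G) (xs : H)
    (hmin : ∀ x : H, f xs + g (A xs) ≤ f x + g (A x))
    (q : G) (hq1 : SubdiffAt g (A xs) (-q))
    (hq2 : SubdiffAt f xs (ContinuousLinearMap.adjoint A q)) :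
    ∀ y : G,
      econj (fun v : G => econj f (ContinuousLinearMap.adjoint A v)) (A xs) + g (A xs)
        ≤ econj (fun v : G => econj f (ContinuousLinearMap.adjoint A v)) y + g y :=
  stmt11_general f g A xs q hq1 hq2
end

section
/- Let f, g be proper closed convex functions on real Hilbert spaces H and G respectively, A : H → G continuous linear, λ > 0, and α ∈ (0,1]. Define the primal RPRS operator T₁ = (1−α)I + α(2 prox_{λ(g∘A)} − I)(2 prox_{λ f} − I) on H, and the dual RPRS operator T₂ = (1−α)I + α(2 prox_{λ⁻¹(g∘A)*(−·)} − I)(2 prox_{λ⁻¹ f*} − I) on H. If w₂ = w₁/λ, then T₂(w₂) = T₁(w₁)/λ. -/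
/-- `p` is the proximal point of `f` at `w`, i.e. `p` minimizes `y ↦ f y + ½‖y - w‖²`. -/
def IsProx {E : Type*} [NormedAddCommGroup E] [InnerProductSpace ℝ E]
    (f : E → EReal) (w p : E) : Prop :=
  ∀ y : E, f p + (((1 : ℝ) / 2 * ‖p - w‖ ^ 2 : ℝ) : EReal)
    ≤ f y + (((1 : ℝ) / 2 * ‖y - w‖ ^ 2 : ℝ) : EReal)

open RealInnerProductSpace Filter Topology

lemma le_of_forall_le_add_mul {a b c : ℝ} (h : ∀ t ∈ Set.Ioo (0 : ℝ) 1, a ≤ b + t * c) :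
    a ≤ b := by
  have hlim : Tendsto (fun t : ℝ => b + t * c) (𝓝[>] 0) (𝓝 b) := by
    have hcont : Continuous fun t : ℝ => b + t * c := by fun_prop
    exact (hcont.tendsto' 0 b (by simp)).mono_left nhdsWithin_le_nhds
  exact ge_of_tendsto hlim (eventually_of_mem (Ioo_mem_nhdsGT one_pos) h)

section Prox

variable {E : Type*} [NormedAddCommGroup E] [InnerProductSpace ℝ E]

theorem IsProx.ne_top {φ : E → EReal} {w p x : E} (hp : IsProx φ w p) (hx : φ x ≠ ⊤) :
    φ p ≠ ⊤ := by
  intro hpt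
  have h := hp x
  rw [hpt, EReal.top_add_coe, top_le_iff] at h
  exact EReal.add_ne_top hx (EReal.coe_ne_top _) h

theorem IsProx.inner_le {f : E → EReal} (hconv : EConvex f) {l : ℝ} (hl : 0 < l) {w p y : E}
    {P Y : ℝ} (hp : IsProx (fun y => (l : EReal) * f y) w p) (hP : f p = P) (hY : f y = Y) :
    ⟪w - p, y - p⟫ ≤ l * (Y - P) := by
  -- compare `p` with the competitor `(1 - t) • p + t • y` and let `t → 0`
  refine le_of_forall_le_add_mul (c := ‖y - p‖ ^ 2 / 2) fun t ⟨ht0, ht1⟩ => ?_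
  have hconv_t : f ((1 - t) • p + t • y) ≤ (((1 - t) * P + t * Y : ℝ) : EReal) := by
    simpa [hP, hY] using hconv p y (1 - t) t (by linarith) ht0.le (by ring)
  have hprox : l * P + ‖p - w‖ ^ 2 / 2 ≤ l * ((1 - t) * P + t * Y) +
      ‖(1 - t) • p + t • y - w‖ ^ 2 / 2 := by
    have h := (hp ((1 - t) • p + t • y)).trans
      (add_le_add_left (mul_le_mul_of_nonneg_left hconv_t (EReal.coe_nonneg.2 hl.le)) _)
    simp only [hP] at h
    norm_cast at h
    linarith
  have hsplit : (1 - t) • p + t • y - w = (p - w) + t • (y - p) := by module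
  rw [hsplit, norm_add_sq_real, norm_smul, inner_smul_right, Real.norm_eq_abs, mul_pow, sq_abs,
    ← neg_sub w p, inner_neg_left] at hprox
  nlinarith

theorem IsProx.exists_subgradient {f : E → EReal} (hf : Proper f) (hconv : EConvex f) {l : ℝ}
    (hl : 0 < l) {w p : E} (hp : IsProx (fun y => (l : EReal) * f y) w p) :
    ∃ P : ℝ, f p = P ∧ ∀ y, ((P + ⟪l⁻¹ • (w - p), y - p⟫ : ℝ) : EReal) ≤ f y := by
  obtain ⟨⟨x, hx⟩, hbot⟩ := hf
  have hpt : f p ≠ ⊤ := by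
    intro hpt
    refine hp.ne_top (x := x) ?_ (by simp [hpt, EReal.coe_mul_top_of_pos hl])
    rw [← EReal.coe_toReal hx (hbot x), ← EReal.coe_mul]
    exact EReal.coe_ne_top _
  refine ⟨(f p).toReal, (EReal.coe_toReal hpt (hbot p)).symm, fun y => ?_⟩
  rcases eq_or_ne (f y) ⊤ with hyt | hyt
  · exact hyt ▸ le_top
  have hY := (EReal.coe_toReal hyt (hbot y)).symm
  have hinner := hp.inner_le hconv hl (EReal.coe_toReal hpt (hbot p)).symm hY
  rw [hY, EReal.coe_le_coe_iff, real_inner_smul_left, ← le_sub_iff_add_le', inv_mul_le_iff₀ hl]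
  exact hinner

theorem coe_inner_sub_le_econj {f : E → EReal} {x : E} {X : ℝ} (hX : f x = X) (v : E) :
    ((⟪v, x⟫ - X : ℝ) : EReal) ≤ econj f v := by
  rw [EReal.coe_sub, ← hX]
  exact le_iSup (fun x => ((⟪v, x⟫ : ℝ) : EReal) - f x) x

theorem econj_eq_of_subgradient {f : E → EReal} {p u : E} {P : ℝ} (hP : f p = P)
    (hsub : ∀ y, ((P + ⟪u, y - p⟫ : ℝ) : EReal) ≤ f y) :
    econj f u = ((⟪u, p⟫ - P : ℝ) : EReal) := by
  refine le_antisymm (iSup_le fun y => ?_) (coe_inner_sub_le_econj hP u)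
  calc ((⟪u, y⟫ : ℝ) : EReal) - f y ≤ ((⟪u, y⟫ : ℝ) : EReal) - ((P + ⟪u, y - p⟫ : ℝ) : EReal) :=
        EReal.sub_le_sub le_rfl (hsub y)
    _ = ((⟪u, p⟫ - P : ℝ) : EReal) := by
        rw [← EReal.coe_sub, inner_sub_right]
        ring_nf

/-- Comparing the prox inequality at `u` with the minorant at `q` leaves `‖q - u‖² ≤ 0`. -/
theorem IsProx.eq_of_affine_minorant {φ : E → EReal} {c q u d : E} {a : ℝ}
    (hq : IsProx φ c q) (hmin : ∀ v, ((a + ⟪v, d⟫ : ℝ) : EReal) ≤ φ v)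
    (hu : φ u = ((a + ⟪u, d⟫ : ℝ) : EReal)) (hcu : u = c - d) : q = u := by
  have hprox : a + ⟪q, d⟫ + 1 / 2 * ‖q - c‖ ^ 2 ≤ a + ⟪u, d⟫ + 1 / 2 * ‖u - c‖ ^ 2 := by
    have h := (add_le_add_left (hmin q) _).trans (hq u)
    rw [hu] at h
    exact_mod_cast h
  have hqc : q - c = (q - u) - d := by rw [hcu]; abel
  have huc : u - c = -d := by rw [hcu]; abel
  rw [hqc, huc, norm_neg, norm_sub_sq_real, inner_sub_left] at hprox
  have : ‖q - u‖ ^ 2 ≤ 0 := by linarith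
  rw [← sub_eq_zero, ← norm_eq_zero]
  exact pow_eq_zero_iff two_ne_zero |>.1 (le_antisymm this (sq_nonneg _))

/-- Moreau's decomposition. -/
theorem IsProx.econj_eq {f : E → EReal} (hf : Proper f) (hconv : EConvex f) {l : ℝ} (hl : 0 < l)
    {w p q : E} (hp : IsProx (fun y => (l : EReal) * f y) w p)
    (hq : IsProx (fun v => ((l⁻¹ : ℝ) : EReal) * econj f v) (l⁻¹ • w) q) :
    q = l⁻¹ • (w - p) := by
  obtain ⟨P, hP, hsub⟩ := hp.exists_subgradient hf hconv hl
  have hscale : ∀ v, ((-(l⁻¹ * P) + ⟪v, l⁻¹ • p⟫ : ℝ) : EReal) =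
      ((l⁻¹ : ℝ) : EReal) * ((⟪v, p⟫ - P : ℝ) : EReal) := by
    intro v
    rw [← EReal.coe_mul, real_inner_smul_right]
    ring_nf
  refine hq.eq_of_affine_minorant (a := -(l⁻¹ * P)) (d := l⁻¹ • p) (fun v => ?_) ?_ (by module)
  · rw [hscale]
    exact mul_le_mul_of_nonneg_left (coe_inner_sub_le_econj hP v)
      (EReal.coe_nonneg.2 (inv_nonneg.2 hl.le))
  · rw [hscale, econj_eq_of_subgradient hP hsub]

theorem IsProx.neg_of_comp_neg {φ : E → EReal} {w q : E} (h : IsProx (fun v => φ (-v)) w q) :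
    IsProx φ (-w) (-q) := by
  intro y
  have hy := h (-y)
  simp only [neg_neg] at hy
  have hnorm : ‖y - -w‖ = ‖-y - w‖ := by rw [← norm_neg]; congr 1; abel
  rwa [neg_sub_neg, norm_sub_rev, hnorm]

end Prox

theorem stmt14_general {H G : Type*} [NormedAddCommGroup H] [InnerProductSpace ℝ H]
    [NormedAddCommGroup G] [InnerProductSpace ℝ G]
    (f : H → EReal) (hf : Proper f) (hfconv : EConvex f)
    (g : G → EReal)
    (A : H →L[ℝ] G)
    (hgA : Proper (fun x : H => g (A x)))
    (hgAconv : EConvex (fun x : H => g (A x)))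
    (l : ℝ) (hl : 0 < l) (α : ℝ)
    (Pf PgA Pfs Pgs : H → H)
    (hPf : ∀ w, IsProx (fun y => (l : EReal) * f y) w (Pf w))
    (hPgA : ∀ w, IsProx (fun y => (l : EReal) * g (A y)) w (PgA w))
    (hPfs : ∀ w, IsProx (fun y => ((l⁻¹ : ℝ) : EReal) * econj f y) w (Pfs w))
    (hPgs : ∀ w, IsProx
      (fun y => ((l⁻¹ : ℝ) : EReal) * econj (fun x : H => g (A x)) (-y)) w (Pgs w))
    (w₁ w₂ : H) (hw : w₂ = l⁻¹ • w₁) :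
    (1 - α) • w₂ + α • ((2 : ℝ) • Pgs ((2 : ℝ) • Pfs w₂ - w₂) - ((2 : ℝ) • Pfs w₂ - w₂))
      = l⁻¹ • ((1 - α) • w₁ +
          α • ((2 : ℝ) • PgA ((2 : ℝ) • Pf w₁ - w₁) - ((2 : ℝ) • Pf w₁ - w₁))) := by
  subst hw
  set r := (2 : ℝ) • Pf w₁ - w₁
  have hPfs_eq : Pfs (l⁻¹ • w₁) = l⁻¹ • (w₁ - Pf w₁) := (hPf w₁).econj_eq hf hfconv hl (hPfs _)
  have hreflect : (2 : ℝ) • Pfs (l⁻¹ • w₁) - l⁻¹ • w₁ = -(l⁻¹ • r) := by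
    rw [hPfs_eq]; module
  have hPgs_eq : Pgs (-(l⁻¹ • r)) = -(l⁻¹ • (r - PgA r)) := by
    have hneg := IsProx.neg_of_comp_neg
      (φ := fun v => ((l⁻¹ : ℝ) : EReal) * econj (fun x : H => g (A x)) v) (hPgs (-(l⁻¹ • r)))
    rw [neg_neg] at hneg
    rw [← (hPgA r).econj_eq hgA hgAconv hl hneg, neg_neg]
  rw [hreflect, hPgs_eq]
  module

/-- RPRS on the primal `min f + g∘A` and RPRS on the dual
`min f* + (g∘A)*(−·)` are equivalent via the scaling `w₂ = w₁/λ`. -/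
theorem stmt14 {H G : Type*} [NormedAddCommGroup H] [InnerProductSpace ℝ H]
    [NormedAddCommGroup G] [InnerProductSpace ℝ G]
    (f : H → EReal) (hf : Proper f) (hfc : LowerSemicontinuous f) (hfconv : EConvex f)
    (g : G → EReal) (hg : Proper g) (hgc : LowerSemicontinuous g) (hgconv : EConvex g)
    (A : H →L[ℝ] G)
    (hgA : Proper (fun x : H => g (A x)))
    (hgAc : LowerSemicontinuous (fun x : H => g (A x)))
    (hgAconv : EConvex (fun x : H => g (A x)))
    (l : ℝ) (hl : 0 < l) (α : ℝ) (hα0 : 0 < α) (hα1 : α ≤ 1)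
    (Pf PgA Pfs Pgs : H → H)
    (hPf : ∀ w, IsProx (fun y => (l : EReal) * f y) w (Pf w))
    (hPgA : ∀ w, IsProx (fun y => (l : EReal) * g (A y)) w (PgA w))
    (hPfs : ∀ w, IsProx (fun y => ((l⁻¹ : ℝ) : EReal) * econj f y) w (Pfs w))
    (hPgs : ∀ w, IsProx
      (fun y => ((l⁻¹ : ℝ) : EReal) * econj (fun x : H => g (A x)) (-y)) w (Pgs w))
    (w₁ w₂ : H) (hw : w₂ = l⁻¹ • w₁) :
    (1 - α) • w₂ + α • ((2 : ℝ) • Pgs ((2 : ℝ) • Pfs w₂ - w₂) - ((2 : ℝ) • Pfs w₂ - w₂))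
      = l⁻¹ • ((1 - α) • w₁ +
          α • ((2 : ℝ) • PgA ((2 : ℝ) • Pf w₁ - w₁) - ((2 : ℝ) • Pf w₁ - w₁))) :=
  stmt14_general f hf hfconv g A hgA hgAconv l hl α Pf PgA Pfs Pgs hPf hPgA hPfs hPgs w₁ w₂ hw
end

section
/- Let G : H → (-∞,∞] be proper closed convex and λ > 0. If z, s satisfy z = u and s = w (identifying the primal multiplier z with the dual primal variable u and the primal variable s with the dual multiplier w), then the ADM y-update t⁺ = argmin_t G(t) + (2λ)⁻¹‖s + t + λz‖² and the dual ADM v-update v⁺ = argmin_v G*(−v) + (λ/2)‖u − v + λ⁻¹w‖² satisfy v⁺ = λ⁻¹(s + t⁺ + λ z). -/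
/-- single-step primal-dual correspondence for ADM: under the identification
`u = z`, `w = s`, the primal y-update `t⁺` and the dual v-update `v⁺` satisfy
`v⁺ = λ⁻¹(s + t⁺ + λz)`. -/
theorem stmt16 {E : Type*} [NormedAddCommGroup E] [InnerProductSpace ℝ E]
    (G : E → EReal) (hG : Proper G) (hGc : LowerSemicontinuous G) (hGconv : EConvex G)
    (l : ℝ) (hl : 0 < l) (s z u w tp vp : E)
    (hu : u = z) (hw : w = s)
    (ht : ∀ t : E, G tp + (((2 * l)⁻¹ * ‖s + tp + l • z‖ ^ 2 : ℝ) : EReal)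
      ≤ G t + (((2 * l)⁻¹ * ‖s + t + l • z‖ ^ 2 : ℝ) : EReal))
    (hv : ∀ v' : E, econj G (-vp) + ((l / 2 * ‖u - vp + l⁻¹ • w‖ ^ 2 : ℝ) : EReal)
      ≤ econj G (-v') + ((l / 2 * ‖u - v' + l⁻¹ • w‖ ^ 2 : ℝ) : EReal)) :
    vp = l⁻¹ • (s + tp + l • z) := by
  rw [hu] at hv
  rw [hw] at hv
  obtain ⟨⟨x₀, hx₀⟩, hbot⟩ := hG
  set a : E := s + tp + l • z with ha
  set vh : E := l⁻¹ • a with hvh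
  -- norm expansion
  have hexp : ∀ (p d : E) (θ : ℝ), ‖p + θ • d‖ ^ 2
      = ‖p‖ ^ 2 + 2 * θ * (inner ℝ p d : ℝ) + θ ^ 2 * ‖d‖ ^ 2 := by
    intro p d θ
    rw [← real_inner_self_eq_norm_sq, ← real_inner_self_eq_norm_sq,
      ← real_inner_self_eq_norm_sq]
    simp only [inner_add_left, inner_add_right, real_inner_smul_left, real_inner_smul_right,
      real_inner_comm d p]
    ring
  -- G tp is finite
  have htop : G tp ≠ ⊤ := by
    intro h
    have h2 := ht x₀
    rw [h, EReal.top_add_of_ne_bot (EReal.coe_ne_bot _), top_le_iff] at h2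
    exact (EReal.add_lt_top hx₀ (EReal.coe_ne_top _)).ne h2
  obtain ⟨gtp, hgtp⟩ : ∃ r : ℝ, G tp = (r : EReal) := by
    lift G tp to ℝ using ⟨htop, hbot tp⟩ with r hr
    exact ⟨r, rfl⟩
  -- subgradient property: -vh ∈ ∂G(tp)
  have hsub : ∀ t : E, G tp + ((inner ℝ (-vh) (t - tp) : ℝ) : EReal) ≤ G t := by
    intro t
    rcases eq_or_ne (G t) ⊤ with hGt | hGt
    · rw [hGt]; exact le_top
    obtain ⟨gt, hgt⟩ : ∃ r : ℝ, G t = (r : EReal) := by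
      lift G t to ℝ using ⟨hGt, hbot t⟩ with r hr
      exact ⟨r, rfl⟩
    rw [hgtp, hgt, ← EReal.coe_add, EReal.coe_le_coe_iff]
    set d : E := t - tp with hd
    set C : ℝ := (2 * l)⁻¹ * ‖d‖ ^ 2 with hC
    have hC0 : 0 ≤ C := by positivity
    have main : ∀ θ : ℝ, 0 < θ → θ ≤ 1 →
        gtp + (inner ℝ (-vh) d : ℝ) ≤ gt + θ * C := by
      intro θ hθ hθ1
      have hts : (1 - θ) • tp + θ • t = tp + θ • d := by
        rw [hd]; rw [sub_smul, one_smul, smul_sub]; abel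
      have hconv := hGconv tp t (1 - θ) θ (by linarith) hθ.le (by ring)
      rw [hts, hgtp, hgt, ← EReal.coe_mul, ← EReal.coe_mul, ← EReal.coe_add] at hconv
      -- G (tp + θ • d) is finite
      have hθtop : G (tp + θ • d) ≠ ⊤ := fun h => by
        rw [h, top_le_iff] at hconv; exact EReal.coe_ne_top _ hconv
      obtain ⟨gθ, hgθ⟩ : ∃ r : ℝ, G (tp + θ • d) = (r : EReal) := by
        lift G (tp + θ • d) to ℝ using ⟨hθtop, hbot _⟩ with r hr
        exact ⟨r, rfl⟩
      rw [hgθ, EReal.coe_le_coe_iff] at hconv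
      have hq := ht (tp + θ • d)
      have harg : s + (tp + θ • d) + l • z = a + θ • d := by rw [ha]; abel
      rw [harg, hgtp, hgθ, ← EReal.coe_add, ← EReal.coe_add, EReal.coe_le_coe_iff] at hq
      rw [hexp a d θ] at hq
      have hin : (inner ℝ (-vh) d : ℝ) = -(l⁻¹ * (inner ℝ a d : ℝ)) := by
        rw [hvh, inner_neg_left, real_inner_smul_left]
      have hl' : (0:ℝ) < (2 * l)⁻¹ := by positivity
      rw [hin, hC]
      have hlne : l ≠ 0 := hl.ne'
      have h2 : (2 * l)⁻¹ * (‖a‖ ^ 2 + 2 * θ * (inner ℝ a d : ℝ) + θ ^ 2 * ‖d‖ ^ 2)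
          = (2 * l)⁻¹ * ‖a‖ ^ 2 + θ * (l⁻¹ * (inner ℝ a d : ℝ))
            + θ ^ 2 * ((2 * l)⁻¹ * ‖d‖ ^ 2) := by
        field_simp
      rw [h2] at hq
      have h1 : gtp ≤ gθ + θ * (l⁻¹ * (inner ℝ a d : ℝ)) + θ ^ 2 * ((2 * l)⁻¹ * ‖d‖ ^ 2) := by
        linarith
      nlinarith [hconv, h1, sq_nonneg θ]
    apply le_of_forall_pos_le_add
    intro ε hε
    have hθpos : 0 < min 1 (ε / (C + 1)) := lt_min one_pos (by positivity)
    have h2 := main _ hθpos (min_le_left _ _)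
    have h3 : min 1 (ε / (C + 1)) * C ≤ ε := by
      calc min 1 (ε / (C + 1)) * C ≤ (ε / (C + 1)) * C :=
            mul_le_mul_of_nonneg_right (min_le_right _ _) hC0
        _ ≤ ε := by
            rw [div_mul_eq_mul_div, div_le_iff₀ (by linarith)]
            nlinarith
    linarith
  -- exact value of the conjugate at -vh
  have hstar : econj G (-vh) = (((inner ℝ (-vh) tp : ℝ) - gtp : ℝ) : EReal) := by
    apply le_antisymm
    · apply iSup_le
      intro x
      rcases eq_or_ne (G x) ⊤ with hGx | hGx
      · rw [hGx]
        simp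
      obtain ⟨gx, hgx⟩ : ∃ r : ℝ, G x = (r : EReal) := by
        lift G x to ℝ using ⟨hGx, hbot x⟩ with r hr
        exact ⟨r, rfl⟩
      have h4 := hsub x
      rw [hgtp, hgx, ← EReal.coe_add, EReal.coe_le_coe_iff] at h4
      rw [hgx, ← EReal.coe_sub, EReal.coe_le_coe_iff]
      rw [inner_sub_right] at h4
      linarith
    · have h5 := le_iSup (fun x => ((inner ℝ (-vh) x : ℝ) : EReal) - G x) tp
      rw [hgtp, ← EReal.coe_sub] at h5
      exact h5
  -- lower bound for the conjugate
  have hlow : ∀ p : E, (((inner ℝ p tp : ℝ) - gtp : ℝ) : EReal) ≤ econj G p := by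
    intro p
    have h5 := le_iSup (fun x => ((inner ℝ p x : ℝ) : EReal) - G x) tp
    rw [hgtp, ← EReal.coe_sub] at h5
    exact h5
  -- econj G (-vp) is finite
  have hvvh := hv vh
  rw [hstar] at hvvh
  have hvptop : econj G (-vp) ≠ ⊤ := fun h => by
    rw [h, EReal.top_add_of_ne_bot (EReal.coe_ne_bot _), top_le_iff,
      ← EReal.coe_add] at hvvh
    exact EReal.coe_ne_top _ hvvh
  have hvpbot : econj G (-vp) ≠ ⊥ := fun h => by
    have := hlow (-vp)
    rw [h, le_bot_iff] at this
    exact EReal.coe_ne_bot _ this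
  obtain ⟨gvp, hgvp⟩ : ∃ r : ℝ, econj G (-vp) = (r : EReal) := by
    lift econj G (-vp) to ℝ using ⟨hvptop, hvpbot⟩ with r hr
    exact ⟨r, rfl⟩
  rw [hgvp, ← EReal.coe_add, ← EReal.coe_add, EReal.coe_le_coe_iff] at hvvh
  have hlow' : (inner ℝ (-vp) tp : ℝ) - gtp ≤ gvp := by
    have := hlow (-vp)
    rw [hgvp, EReal.coe_le_coe_iff] at this
    exact this
  -- geometric identities
  have hVh : z - vh + l⁻¹ • s = -(l⁻¹ • tp) := by
    rw [hvh, ha, smul_add, smul_add, smul_smul, inv_mul_cancel₀ hl.ne', one_smul]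
    abel
  have hVp : z - vp + l⁻¹ • s = -(l⁻¹ • tp) + (vh - vp) := by
    rw [← hVh]; abel
  set dd : E := vh - vp with hdd
  have e1 : ‖z - vp + l⁻¹ • s‖ ^ 2
      = ‖-(l⁻¹ • tp)‖ ^ 2 + 2 * 1 * (inner ℝ (-(l⁻¹ • tp)) dd : ℝ) + 1 ^ 2 * ‖dd‖ ^ 2 := by
    rw [hVp, show -(l⁻¹ • tp) + dd = -(l⁻¹ • tp) + (1:ℝ) • dd by rw [one_smul]]
    exact hexp _ _ 1
  rw [hVh, e1] at hvvh
  have i1 : (inner ℝ (-(l⁻¹ • tp)) dd : ℝ) = -(l⁻¹ * (inner ℝ tp dd : ℝ)) := by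
    rw [inner_neg_left, real_inner_smul_left]
  have i2 : (inner ℝ (-vh) tp : ℝ) - (inner ℝ (-vp) tp : ℝ) = -(inner ℝ tp dd : ℝ) := by
    rw [hdd, inner_neg_left, inner_neg_left, inner_sub_right,
      real_inner_comm tp vh, real_inner_comm tp vp]
    ring
  set Q : ℝ := ‖-(l⁻¹ • tp)‖ ^ 2 with hQ
  set X : ℝ := (inner ℝ tp dd : ℝ) with hX
  rw [i1] at hvvh
  have key2 : l / 2 * (Q + 2 * 1 * (-(l⁻¹ * X)) + 1 ^ 2 * ‖dd‖ ^ 2)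
      = l / 2 * Q - X + l / 2 * ‖dd‖ ^ 2 := by
    field_simp
    ring
  have hvvh' : gvp + (l / 2 * Q - X + l / 2 * ‖dd‖ ^ 2)
      ≤ (inner ℝ (-vh) tp : ℝ) - gtp + l / 2 * Q := by
    linarith [hvvh, key2]
  have hdd0 : l / 2 * ‖dd‖ ^ 2 ≤ 0 := by linarith [hvvh', hlow', i2]
  have hddz : dd = 0 := by
    have hl2 : (0:ℝ) < l / 2 := by positivity
    have h6 : ‖dd‖ ^ 2 ≤ 0 :=
      le_of_mul_le_mul_left (by linarith : l / 2 * ‖dd‖ ^ 2 ≤ l / 2 * 0) hl2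
    have h7 : ‖dd‖ ^ 2 = 0 := le_antisymm h6 (sq_nonneg _)
    exact norm_eq_zero.mp (pow_eq_zero_iff (two_ne_zero).symm.symm |>.mp h7)
  rw [hdd, sub_eq_zero] at hddz
  exact hddz.symm
end
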